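/- arXiv:2401.17089 — 3 statements merged into one kernel-verified Lean document; each statement's English description precedes it below -/
import Mathlib

section
/- Let (X,Y) be an ℝ^d × ℝ^d-valued random pair with joint law π, and let μ and ν denote the laws of X and Y respectively. Suppose every univariate marginal cumulative distribution function F_{X_i} (i = 1,…,d) and F_{Y_i} (i = 1,…,d) is continuous and strictly increasing on ℝ. Define T_X : ℝ^d → [0,1]^d by T_X(x) = (F_{X_1}(x_1), …, F_{X_d}(x_d)) and T_Y analogously. Then KL( (T_X × T_Y)_# π ∥ (T_X)_# μ ⊗ (T_Y)_# ν ) = KL( π ∥ μ ⊗ ν ), i.e., the mutual information of (X,Y) equals the KL divergence between the copula measure of (X,Y) and the product of the copula measures of X and Y. -/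
open MeasureTheory
open scoped ENNReal NNReal Classical

/-- Kullback–Leibler divergence, valued in `[0,∞]`: `∫ log (dP/dQ) dP` when `P ≪ Q`
(and the log-likelihood ratio is integrable), `+∞` otherwise. -/
noncomputable def KL {α : Type*} [MeasurableSpace α] (P Q : Measure α) : ℝ≥0∞ :=
  if P ≪ Q ∧ Integrable (llr P Q) P then ENNReal.ofReal (∫ x, llr P Q x ∂P) else ⊤

lemma absolutelyContinuous_of_map {α β : Type*} [MeasurableSpace α] [MeasurableSpace β]
    {f : α → β} (hf : MeasurableEmbedding f) {P Q : Measure α}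
    (h : P.map f ≪ Q.map f) : P ≪ Q := by
  refine Measure.AbsolutelyContinuous.mk fun s hs hQs => ?_
  have h1 : (Q.map f) (f '' s) = 0 := by
    rw [hf.map_apply, hf.injective.preimage_image, hQs]
  have h2 := h h1
  rwa [hf.map_apply, hf.injective.preimage_image] at h2

lemma KL_map {α β : Type*} [MeasurableSpace α] [MeasurableSpace β]
    {f : α → β} (hf : MeasurableEmbedding f) (P Q : Measure α)
    [SigmaFinite P] [SigmaFinite Q] :
    KL (P.map f) (Q.map f) = KL P Q := by
  by_cases hPQ : P ≪ Q
  · have hac : P.map f ≪ Q.map f := hf.absolutelyContinuous_map hPQ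
    have hll : (fun x => llr (P.map f) (Q.map f) (f x)) =ᵐ[P] llr P Q := by
      filter_upwards [hPQ.ae_le (hf.rnDeriv_map P Q)] with x hx
      simp only [llr, hx]
    have hint : Integrable (llr (P.map f) (Q.map f)) (P.map f) ↔ Integrable (llr P Q) P := by
      rw [hf.integrable_map_iff]
      exact integrable_congr hll
    have hintg : ∫ x, llr (P.map f) (Q.map f) x ∂(P.map f) = ∫ x, llr P Q x ∂P := by
      rw [hf.integral_map]
      exact integral_congr_ae hll
    unfold KL
    by_cases hI : Integrable (llr P Q) P
    · rw [if_pos ⟨hac, hint.mpr hI⟩, if_pos ⟨hPQ, hI⟩, hintg]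
    · rw [if_neg (fun h => hI (hint.mp h.2)), if_neg (fun h => hI h.2)]
  · have hac : ¬ P.map f ≪ Q.map f := fun h => hPQ (absolutelyContinuous_of_map hf h)
    unfold KL
    rw [if_neg (fun h => hac h.1), if_neg (fun h => hPQ h.1)]

/-- The mutual information of `(X,Y)` equals the KL divergence between the copula measure of
`(X,Y)` and the product of the copula measures of `X` and `Y`, when all univariate marginal
CDFs are continuous and strictly increasing. -/
theorem stmt1 {d : ℕ} (π : Measure ((Fin d → ℝ) × (Fin d → ℝ))) [IsProbabilityMeasure π]
    (FX FY : Fin d → ℝ → ℝ)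
    (hFXcont : ∀ i, Continuous (FX i)) (hFXmono : ∀ i, StrictMono (FX i))
    (hFYcont : ∀ i, Continuous (FY i)) (hFYmono : ∀ i, StrictMono (FY i))
    (hFX : ∀ i t, FX i t = ((π.fst.map (fun x => x i)) (Set.Iic t)).toReal)
    (hFY : ∀ i t, FY i t = ((π.snd.map (fun y => y i)) (Set.Iic t)).toReal) :
    KL (π.map (Prod.map (fun x i => FX i (x i)) (fun y i => FY i (y i))))
        ((π.fst.map (fun x i => FX i (x i))).prod (π.snd.map (fun y i => FY i (y i))))
      = KL π (π.fst.prod π.snd) := by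
  set TX : (Fin d → ℝ) → (Fin d → ℝ) := fun x i => FX i (x i) with hTX
  set TY : (Fin d → ℝ) → (Fin d → ℝ) := fun y i => FY i (y i) with hTY
  have hTXm : Measurable TX :=
    measurable_pi_lambda _ fun i => (hFXcont i).measurable.comp (measurable_pi_apply i)
  have hTYm : Measurable TY :=
    measurable_pi_lambda _ fun i => (hFYcont i).measurable.comp (measurable_pi_apply i)
  have hTXi : Function.Injective TX := fun x x' h => by
    funext i
    exact (hFXmono i).injective (congrFun h i)
  have hTYi : Function.Injective TY := fun y y' h => by
    funext i
    exact (hFYmono i).injective (congrFun h i)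
  have hTm : Measurable (Prod.map TX TY) := hTXm.prodMap hTYm
  have hTi : Function.Injective (Prod.map TX TY) := hTXi.prodMap hTYi
  have hemb : MeasurableEmbedding (Prod.map TX TY) := hTm.measurableEmbedding hTi
  rw [Measure.map_prod_map _ _ hTXm hTYm]
  exact KL_map hemb π (π.fst.prod π.snd)
end

section
/- Let R and Q be probability measures on [0,1]^{2d} with Q ≪ R, and suppose the Radon–Nikodym density of Q with respect to R has the form dQ/dR(u) = exp( μ₀ + θ·φ(u) ) · ∏_{i=1}^{2d} g_i(u_i), where φ : [0,1]^{2d} → ℝ is measurable, μ₀, θ ∈ ℝ, and each g_i : [0,1] → [0,∞) satisfies log g_i ∈ L¹([0,1]). Let P be a probability measure on [0,1]^{2d} with P ≪ R and KL(P ∥ R) < ∞ such that: (i) for each coordinate i = 1,…,2d, the i-th coordinate marginal of P equals the i-th coordinate marginal of Q; (ii) ∫ φ dP = ∫ φ dQ, with φ integrable under both P and Q; and (iii) each function u ↦ log g_i(u_i) is integrable under both P and Q. Then KL(P ∥ R) = KL(P ∥ Q) + KL(Q ∥ R); in particular KL(P ∥ R) ≥ KL(Q ∥ R), so Q is the I-projection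 of R onto the set of measures satisfying the marginal and distortion-moment constraints. -/
open MeasureTheory ProbabilityTheory
open scoped ENNReal NNReal Classical

local notation "UI" => Set.Icc (0:ℝ) 1

instance : Nonempty (UI) := ⟨⟨0, by constructor <;> norm_num⟩⟩

private lemma polishUI : PolishSpace (UI) := IsClosed.polishSpace isClosed_Icc

/-- Key measurable-version lemma: if `u ↦ f (u i)` is a.e.-measurable w.r.t. a finite
measure `μ` on the cube, then `f` has a measurable version a.e. w.r.t. the `i`-th marginal. -/
private lemma key_transfer {n : ℕ} (i : Fin n) (μ : Measure (Fin n → UI))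
    [IsProbabilityMeasure μ] (f : UI → ℝ)
    (hf : AEMeasurable (fun u => f (u i)) μ) :
    ∃ k : UI → ℝ, Measurable k ∧ f =ᵐ[μ.map (fun u => u i)] k := by
  haveI : PolishSpace (UI) := polishUI
  set π : (Fin n → UI) → UI := fun u => u i with hπ
  have hπm : Measurable π := measurable_pi_apply i
  set e : (Fin n → UI) → UI × (Fin n → UI) := fun u => (u i, u) with he
  have hem : Measurable e := hπm.prodMk measurable_id
  set ρ : Measure (UI × (Fin n → UI)) := μ.map e with hρ
  haveI : IsProbabilityMeasure ρ := Measure.isProbabilityMeasure_map hem.aemeasurable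
  -- measurable version of f ∘ π
  set h : (Fin n → UI) → ℝ := hf.mk _ with hh
  have hhm : Measurable h := hf.measurable_mk
  have heq : (fun u => f (u i)) =ᵐ[μ] h := hf.ae_eq_mk
  -- bad set
  set M : Set (Fin n → UI) := toMeasurable μ {u | f (u i) ≠ h u} with hM
  have hMm : MeasurableSet M := measurableSet_toMeasurable _ _
  have hMnull : μ M = 0 := by
    rw [hM, measure_toMeasurable]
    exact heq
  set B : Set (UI × (Fin n → UI)) := {p | p.2 ∈ M ∨ (p.1 : ℝ) ≠ (p.2 i : ℝ)} with hB
  have hBm : MeasurableSet B := by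
    refine (hMm.preimage measurable_snd).union ?_
    exact (measurableSet_eq_fun (measurable_subtype_coe.comp measurable_fst)
      (measurable_subtype_coe.comp ((measurable_pi_apply i).comp measurable_snd))).compl
  have hρB : ρ B = 0 := by
    rw [hρ, Measure.map_apply hem hBm]
    have : e ⁻¹' B ⊆ M := by
      intro u hu
      simp only [he, hB, Set.mem_preimage, Set.mem_setOf_eq] at hu
      rcases hu with hu | hu
      · exact hu
      · exact absurd rfl hu
    exact measure_mono_null this hMnull
  -- disintegration
  set κ := ρ.condKernel with hκ
  have hdis : ρ.fst ⊗ₘ κ = ρ := ρ.disintegrate κ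
  have hfst : ρ.fst = μ.map π := by
    rw [hρ, Measure.fst, Measure.map_map measurable_fst hem]
    rfl
  -- the measurable version of f
  set k : UI → ℝ := fun t => Real.tan (∫ ω, Real.arctan (h ω) ∂(κ t)) with hk
  have htan : Measurable Real.tan := by
    have : Real.tan = fun x => Real.sin x / Real.cos x := by
      funext x; exact Real.tan_eq_sin_div_cos x
    rw [this]
    exact Real.continuous_sin.measurable.div Real.continuous_cos.measurable
  have hkm : Measurable k := by
    have h1 : StronglyMeasurable (fun p : UI × (Fin n → UI) => Real.arctan (h p.2)) :=
      (Real.continuous_arctan.measurable.comp (hhm.comp measurable_snd)).stronglyMeasurable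
    exact htan.comp
      (MeasureTheory.StronglyMeasurable.integral_kernel_prod_right' h1).measurable
  refine ⟨k, hkm, ?_⟩
  -- a.e. sections
  have hB0 : ∀ᵐ t ∂(ρ.fst), κ t (Prod.mk t ⁻¹' B) = 0 := by
    have hcomp : (ρ.fst ⊗ₘ κ) B = 0 := by
      rw [hdis]; exact hρB
    rw [Measure.compProd_apply hBm] at hcomp
    exact (lintegral_eq_zero_iff (Kernel.measurable_kernel_prodMk_left hBm)).mp hcomp
  rw [← hfst]
  filter_upwards [hB0] with t ht
  have hae : ∀ᵐ ω ∂(κ t), Real.arctan (h ω) = Real.arctan (f t) := by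
    have : ∀ᵐ ω ∂(κ t), (t, ω) ∉ B := by
      rw [ae_iff]
      simpa using (show κ t {a | (t, a) ∈ B} = 0 from ht)
    filter_upwards [this] with ω hω
    simp only [hB, Set.mem_setOf_eq, not_or, not_not] at hω
    obtain ⟨hω1, hω2⟩ := hω
    have hfh : f (ω i) = h ω := by
      by_contra hcon
      exact hω1 (subset_toMeasurable _ _ hcon)
    have : (t : UI) = ω i := Subtype.ext hω2
    rw [this, hfh]
  have : ∫ ω, Real.arctan (h ω) ∂(κ t) = Real.arctan (f t) := by
    rw [integral_congr_ae hae, integral_const]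
    simp
  show f t = k t
  rw [hk]
  simp only [this, Real.tan_arctan]

/-- Two-measure version: a common measurable coordinate version for `P` and `Q`. -/
private lemma transfer2 {n : ℕ} (i : Fin n) (P Q : Measure (Fin n → UI))
    [IsProbabilityMeasure P] [IsProbabilityMeasure Q]
    (hmarg : P.map (fun u => u i) = Q.map (fun u => u i))
    (f : UI → ℝ) (hf : AEMeasurable (fun u => f (u i)) Q) :
    ∃ k : UI → ℝ, Measurable k ∧
      (fun u => f (u i)) =ᵐ[Q] (fun u => k (u i)) ∧
      (fun u => f (u i)) =ᵐ[P] (fun u => k (u i)) := by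
  obtain ⟨k, hkm, hk⟩ := key_transfer i Q f hf
  refine ⟨k, hkm, ?_⟩
  have hπm : Measurable (fun u : Fin n → UI => u i) := measurable_pi_apply i
  set N : Set UI := toMeasurable (Q.map (fun u => u i)) {t | f t ≠ k t} with hN
  have hNm : MeasurableSet N := measurableSet_toMeasurable _ _
  have hNnull : (Q.map (fun u => u i)) N = 0 := by
    rw [hN, measure_toMeasurable]; exact hk
  have hsub : ∀ u : Fin n → UI, f (u i) ≠ k (u i) → u i ∈ N :=
    fun u hu => subset_toMeasurable _ _ hu
  constructor
  · rw [Filter.eventuallyEq_iff_exists_mem]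
    refine ⟨{u | u i ∉ N}, ?_, fun u hu => by_contra fun hc => hu (hsub u hc)⟩
    rw [mem_ae_iff]
    have : {u : Fin n → UI | u i ∉ N}ᶜ = (fun u : Fin n → UI => u i) ⁻¹' N := by
      ext u; simp
    rw [this, ← Measure.map_apply hπm hNm]
    exact hNnull
  · rw [Filter.eventuallyEq_iff_exists_mem]
    refine ⟨{u | u i ∉ N}, ?_, fun u hu => by_contra fun hc => hu (hsub u hc)⟩
    rw [mem_ae_iff]
    have : {u : Fin n → UI | u i ∉ N}ᶜ = (fun u : Fin n → UI => u i) ⁻¹' N := by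
      ext u; simp
    rw [this, ← Measure.map_apply hπm hNm, hmarg]
    exact hNnull

/-- Transfer of coordinate integrals from `Q` to `P` via equal marginals. -/
private lemma transfer_integral {n : ℕ} (i : Fin n) (P Q : Measure (Fin n → UI))
    [IsProbabilityMeasure P] [IsProbabilityMeasure Q]
    (hmarg : P.map (fun u => u i) = Q.map (fun u => u i))
    (f : UI → ℝ) (hf : AEMeasurable (fun u => f (u i)) Q) :
    ∫ u, f (u i) ∂P = ∫ u, f (u i) ∂Q := by
  obtain ⟨k, hkm, hkQ, hkP⟩ := transfer2 i P Q hmarg f hf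
  have hπm : Measurable (fun u : Fin n → UI => u i) := measurable_pi_apply i
  rw [integral_congr_ae hkQ, integral_congr_ae hkP]
  have hP : ∫ u, k (u i) ∂P = ∫ t, k t ∂(P.map (fun u => u i)) :=
    (integral_map hπm.aemeasurable hkm.aestronglyMeasurable).symm
  have hQ : ∫ u, k (u i) ∂Q = ∫ t, k t ∂(Q.map (fun u => u i)) :=
    (integral_map hπm.aemeasurable hkm.aestronglyMeasurable).symm
  rw [hP, hQ, hmarg]

/-- Transfer of coordinate null events from `Q` to `P` via equal marginals. -/
private lemma transfer_null {n : ℕ} (i : Fin n) (P Q : Measure (Fin n → UI))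
    [IsProbabilityMeasure P] [IsProbabilityMeasure Q]
    (hmarg : P.map (fun u => u i) = Q.map (fun u => u i))
    (f : UI → ℝ) (hf0 : (fun u => f (u i)) =ᵐ[Q] (fun _ => (0:ℝ))) :
    (fun u => f (u i)) =ᵐ[P] (fun _ => (0:ℝ)) := by
  have hf : AEMeasurable (fun u => f (u i)) Q := aemeasurable_const.congr hf0.symm
  obtain ⟨k, hkm, hkQ, hkP⟩ := transfer2 i P Q hmarg f hf
  have hπm : Measurable (fun u : Fin n → UI => u i) := measurable_pi_apply i
  have hkQ0 : (fun u => k (u i)) =ᵐ[Q] (fun _ => (0:ℝ)) := hkQ.symm.trans hf0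
  have hset : MeasurableSet {t : UI | k t ≠ 0} := (hkm (measurableSet_singleton 0)).compl
  have hQ0 : Q ((fun u : Fin n → UI => u i) ⁻¹' {t | k t ≠ 0}) = 0 := by
    have h' := hkQ0
    rw [Filter.EventuallyEq, ae_iff] at h'
    simpa using h'
  have hP0 : P ((fun u : Fin n → UI => u i) ⁻¹' {t | k t ≠ 0}) = 0 := by
    rw [← Measure.map_apply hπm hset, hmarg, Measure.map_apply hπm hset]
    exact hQ0
  have hkP0 : (fun u => k (u i)) =ᵐ[P] (fun _ => (0:ℝ)) := by
    rw [Filter.EventuallyEq, ae_iff]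
    simpa using hP0
  exact hkP.trans hkP0

/-- Nonnegativity of the integral defining KL. -/
private lemma llr_integral_nonneg {α : Type*} [MeasurableSpace α] (μ ν : Measure α)
    [IsProbabilityMeasure μ] [IsProbabilityMeasure ν] (hμν : μ ≪ ν)
    (h : Integrable (llr μ ν) μ) : 0 ≤ ∫ x, llr μ ν x ∂μ := by
  have hexp : (fun x => Real.exp (-llr μ ν x)) =ᵐ[μ] fun x => (ν.rnDeriv μ x).toReal :=
    exp_neg_llr hμν
  have hint : Integrable (fun x => Real.exp (-llr μ ν x)) μ :=
    Measure.integrable_toReal_rnDeriv.congr hexp.symm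
  have h1 : ∫ x, (-llr μ ν x) ∂μ ≤ ∫ x, (Real.exp (-llr μ ν x) - 1) ∂μ := by
    refine integral_mono h.neg (hint.sub (integrable_const 1)) fun x => ?_
    have := Real.add_one_le_exp (-llr μ ν x)
    simp only [Pi.neg_apply]
    linarith
  have h2 : ∫ x, (Real.exp (-llr μ ν x) - 1) ∂μ = ∫ x, Real.exp (-llr μ ν x) ∂μ - 1 := by
    rw [integral_sub hint (integrable_const 1), integral_const]
    simp
  have h3 : ∫ x, Real.exp (-llr μ ν x) ∂μ = ∫ x, (ν.rnDeriv μ x).toReal ∂μ :=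
    integral_congr_ae hexp
  have h4 : ∫ x, (ν.rnDeriv μ x).toReal ∂μ ≤ (ν Set.univ).toReal := by
    rw [← setIntegral_univ]
    exact Measure.setIntegral_toReal_rnDeriv_le (measure_ne_top ν _)
  have h5 : ∫ x, (-llr μ ν x) ∂μ = - ∫ x, llr μ ν x ∂μ := integral_neg _
  simp only [measure_univ, ENNReal.toReal_one] at h4
  linarith

/-- Pythagorean identity for the I-projection with density of product-exponential form
(Theorem: analytical solution of the copula-based OC-RDF projection problem). -/
theorem stmt3 {d : ℕ} (R Q P : Measure (Fin (2*d) → Set.Icc (0:ℝ) 1))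
    [IsProbabilityMeasure R] [IsProbabilityMeasure Q] [IsProbabilityMeasure P]
    (φ : (Fin (2*d) → Set.Icc (0:ℝ) 1) → ℝ) (hφmeas : Measurable φ) (μ₀ θ : ℝ)
    (g : Fin (2*d) → Set.Icc (0:ℝ) 1 → ℝ) (hg0 : ∀ i t, 0 ≤ g i t)
    (hgL1 : ∀ i, Integrable (fun t => Real.log (g i t))
      (volume : Measure (Set.Icc (0:ℝ) 1)))
    (hQR : Q ≪ R)
    (hdens : ∀ᵐ u ∂ R, Q.rnDeriv R u =
        ENNReal.ofReal (Real.exp (μ₀ + θ * φ u) * ∏ i, g i (u i)))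
    (hPR : P ≪ R) (hPRfin : KL P R < ⊤)
    (hmarg : ∀ i, P.map (fun u => u i) = Q.map (fun u => u i))
    (hφP : Integrable φ P) (hφQ : Integrable φ Q)
    (hφeq : ∫ u, φ u ∂P = ∫ u, φ u ∂Q)
    (hgP : ∀ i, Integrable (fun u => Real.log (g i (u i))) P)
    (hgQ : ∀ i, Integrable (fun u => Real.log (g i (u i))) Q) :
    KL P R = KL P Q + KL Q R ∧ KL Q R ≤ KL P R := by
  classical
  haveI : Q.HaveLebesgueDecomposition R :=
    @Measure.haveLebesgueDecomposition_of_sigmaFinite _ _ Q R instSFiniteOfSigmaFinite inferInstance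
  haveI : P.HaveLebesgueDecomposition Q :=
    @Measure.haveLebesgueDecomposition_of_sigmaFinite _ _ P Q instSFiniteOfSigmaFinite inferInstance
  haveI : P.HaveLebesgueDecomposition R :=
    @Measure.haveLebesgueDecomposition_of_sigmaFinite _ _ P R instSFiniteOfSigmaFinite inferInstance
  set F : (Fin (2*d) → UI) → ℝ :=
    fun u => μ₀ + θ * φ u + ∑ i, Real.log (g i (u i)) with hF
  have hcalc : ∀ u : Fin (2*d) → UI, (∀ i, (0:ℝ) < g i (u i)) →
      Real.exp (μ₀ + θ * φ u) * ∏ i, g i (u i) = Real.exp (F u) := by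
    intro u hu
    show _ = Real.exp (μ₀ + θ * φ u + ∑ i, Real.log (g i (u i)))
    rw [Real.exp_add (μ₀ + θ * φ u) (∑ i, Real.log (g i (u i))), Real.exp_sum]
    congr 1
    exact Finset.prod_congr rfl fun i _ => (Real.exp_log (hu i)).symm
  -- a.e. Q facts
  have hQR1 : ∀ᵐ u ∂Q, Q.rnDeriv R u
      = ENNReal.ofReal (Real.exp (μ₀ + θ * φ u) * ∏ i, g i (u i)) := hQR.ae_le hdens
  have hQpos : ∀ᵐ u ∂Q, 0 < Q.rnDeriv R u := Measure.rnDeriv_pos hQR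
  have hQg : ∀ᵐ u ∂Q, ∀ i, 0 < g i (u i) := by
    filter_upwards [hQR1, hQpos] with u h1 h2
    rw [h1] at h2
    have h3 : 0 < Real.exp (μ₀ + θ * φ u) * ∏ i, g i (u i) := ENNReal.ofReal_pos.mp h2
    have hprod : 0 < ∏ i, g i (u i) := by
      by_contra hc
      push_neg at hc
      have hnn : (0:ℝ) ≤ ∏ i, g i (u i) := Finset.prod_nonneg fun i _ => hg0 i (u i)
      have h0 : ∏ i, g i (u i) = 0 := le_antisymm hc hnn
      rw [h0, mul_zero] at h3; exact lt_irrefl _ h3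
    intro i
    have hne : g i (u i) ≠ 0 := Finset.prod_ne_zero_iff.mp hprod.ne' i (Finset.mem_univ i)
    exact lt_of_le_of_ne (hg0 i (u i)) (Ne.symm hne)
  have hQllr : llr Q R =ᵐ[Q] F := by
    filter_upwards [hQR1, hQg] with u h1 h2
    show Real.log (Q.rnDeriv R u).toReal = F u
    rw [h1, ENNReal.toReal_ofReal
        (mul_nonneg (Real.exp_pos _).le (Finset.prod_nonneg fun i _ => hg0 i (u i))),
      hcalc u h2, Real.log_exp]
  -- a.e. P facts
  have hPg : ∀ᵐ u ∂P, ∀ i, 0 < g i (u i) := by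
    rw [ae_all_iff]
    intro i
    set f : UI → ℝ := fun t => if g i t = 0 then (1:ℝ) else 0 with hf
    have hQf0 : (fun u : Fin (2*d) → UI => f (u i)) =ᵐ[Q] (fun _ => (0:ℝ)) := by
      filter_upwards [hQg] with u hu
      simp only [hf, if_neg (hu i).ne']
    have hPf0 := transfer_null i P Q (hmarg i) f hQf0
    filter_upwards [hPf0] with u hu
    by_contra hc
    push_neg at hc
    have h0 : g i (u i) = 0 := le_antisymm hc (hg0 i (u i))
    simp only [hf, if_pos h0] at hu
    exact one_ne_zero hu
  have hPR1 : ∀ᵐ u ∂P, Q.rnDeriv R u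
      = ENNReal.ofReal (Real.exp (μ₀ + θ * φ u) * ∏ i, g i (u i)) := hPR.ae_le hdens
  have hPQRpos : ∀ᵐ u ∂P, 0 < Q.rnDeriv R u := by
    filter_upwards [hPR1, hPg] with u h1 h2
    rw [h1]
    exact ENNReal.ofReal_pos.mpr
      (mul_pos (Real.exp_pos _) (Finset.prod_pos fun i _ => h2 i))
  have hPQRfin : ∀ᵐ u ∂P, Q.rnDeriv R u < ⊤ := hPR.ae_le (Measure.rnDeriv_lt_top Q R)
  have hPllrQR : llr Q R =ᵐ[P] F := by
    filter_upwards [hPR1, hPg] with u h1 h2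
    show Real.log (Q.rnDeriv R u).toReal = F u
    rw [h1, ENNReal.toReal_ofReal
        (mul_nonneg (Real.exp_pos _).le (Finset.prod_nonneg fun i _ => hg0 i (u i))),
      hcalc u h2, Real.log_exp]
  -- P ≪ Q
  have hPQ : P ≪ Q := by
    refine Measure.AbsolutelyContinuous.mk fun S hS hQS => ?_
    have hzero : ∀ᵐ u ∂ R, u ∈ S → Q.rnDeriv R u = 0 := by
      have hQS' : ∫⁻ u in S, Q.rnDeriv R u ∂ R = 0 := by
        rw [Measure.setLIntegral_rnDeriv hQR]
        exact hQS
      have h' := (lintegral_eq_zero_iff (Measure.measurable_rnDeriv Q R)).mp hQS'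
      exact (ae_restrict_iff' hS).mp h'
    have hP2 := hPR.ae_le hzero
    have hnot : ∀ᵐ u ∂P, u ∉ S := by
      filter_upwards [hP2, hPQRpos] with u h1 h2
      intro hu
      rw [h1 hu] at h2; exact lt_irrefl _ h2
    rw [ae_iff] at hnot
    simpa using hnot
  -- chain rule
  have hc : ∀ᵐ u ∂P, P.rnDeriv Q u * Q.rnDeriv R u = P.rnDeriv R u :=
    hPR.ae_le (Measure.rnDeriv_mul_rnDeriv hPQ)
  have hPQpos : ∀ᵐ u ∂P, 0 < P.rnDeriv Q u := Measure.rnDeriv_pos hPQ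
  have hPQfin : ∀ᵐ u ∂P, P.rnDeriv Q u < ⊤ := hPQ.ae_le (Measure.rnDeriv_lt_top P Q)
  have hllr_add : llr P R =ᵐ[P] fun u => llr P Q u + llr Q R u := by
    filter_upwards [hc, hPQpos, hPQfin, hPQRpos, hPQRfin] with u h1 h2 h3 h4 h5
    show Real.log (P.rnDeriv R u).toReal = _
    rw [← h1, ENNReal.toReal_mul,
      Real.log_mul (ENNReal.toReal_ne_zero.mpr ⟨h2.ne', h3.ne⟩)
        (ENNReal.toReal_ne_zero.mpr ⟨h4.ne', h5.ne⟩)]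
    rfl
  -- integrabilities
  have hIntPR : Integrable (llr P R) P := by
    by_contra hcon
    have hT : KL P R = ⊤ := by
      rw [KL, if_neg]; rintro ⟨_, h2⟩; exact hcon h2
    rw [hT] at hPRfin; exact lt_irrefl _ hPRfin
  have hIntFQ : Integrable F Q :=
    ((integrable_const μ₀).add (hφQ.const_mul θ)).add
      (integrable_finset_sum _ fun i _ => hgQ i)
  have hIntFP : Integrable F P :=
    ((integrable_const μ₀).add (hφP.const_mul θ)).add
      (integrable_finset_sum _ fun i _ => hgP i)
  have hQint : Integrable (llr Q R) Q := hIntFQ.congr hQllr.symm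
  have hPint : Integrable (llr Q R) P := hIntFP.congr hPllrQR.symm
  have hPQint : Integrable (llr P Q) P := by
    refine (hIntPR.sub hPint).congr ?_
    filter_upwards [hllr_add] with u hu
    show llr P R u - llr Q R u = llr P Q u
    rw [hu]; ring
  -- integral identities
  have hsplit : ∫ u, llr P R u ∂P = ∫ u, llr P Q u ∂P + ∫ u, llr Q R u ∂P := by
    rw [integral_congr_ae hllr_add]
    exact integral_add hPQint hPint
  have expand : ∀ (μ : Measure (Fin (2*d) → UI)) [IsProbabilityMeasure μ],
      Integrable φ μ → (∀ i, Integrable (fun u => Real.log (g i (u i))) μ) →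
      ∫ u, F u ∂μ = μ₀ + θ * ∫ u, φ u ∂μ + ∑ i, ∫ u, Real.log (g i (u i)) ∂μ := by
    intro μ _ hφ hg
    have e1 : ∫ u, F u ∂μ
        = (∫ u, (μ₀ + θ * φ u) ∂μ) + ∫ u, (∑ i, Real.log (g i (u i))) ∂μ :=
      integral_add ((integrable_const μ₀).add (hφ.const_mul θ))
        (integrable_finset_sum _ fun i _ => hg i)
    have e2 : ∫ u, (μ₀ + θ * φ u) ∂μ
        = (∫ _u, μ₀ ∂μ) + ∫ u, θ * φ u ∂μ :=
      integral_add (integrable_const μ₀) (hφ.const_mul θ)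
    have e3 : ∫ u, (∑ i, Real.log (g i (u i))) ∂μ
        = ∑ i, ∫ u, Real.log (g i (u i)) ∂μ :=
      integral_finset_sum _ fun i _ => hg i
    have e4 : ∫ u, θ * φ u ∂μ = θ * ∫ u, φ u ∂μ := integral_const_mul θ φ
    rw [e1, e2, e3, e4, integral_const]
    simp
  have hFeq : ∫ u, F u ∂P = ∫ u, F u ∂Q := by
    rw [expand P hφP hgP, expand Q hφQ hgQ, hφeq]
    congr 1
    exact Finset.sum_congr rfl fun i _ =>
      transfer_integral i P Q (hmarg i) (fun t => Real.log (g i t)) (hgQ i).aemeasurable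
  have hQeq : ∫ u, llr Q R u ∂P = ∫ u, llr Q R u ∂Q := by
    rw [integral_congr_ae hPllrQR, integral_congr_ae hQllr, hFeq]
  -- KL values
  have hKL_PR : KL P R = ENNReal.ofReal (∫ u, llr P R u ∂P) := by
    rw [KL, if_pos ⟨hPR, hIntPR⟩]
  have hKL_PQ : KL P Q = ENNReal.ofReal (∫ u, llr P Q u ∂P) := by
    rw [KL, if_pos ⟨hPQ, hPQint⟩]
  have hKL_QR : KL Q R = ENNReal.ofReal (∫ u, llr Q R u ∂Q) := by
    rw [KL, if_pos ⟨hQR, hQint⟩]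
  have n1 : 0 ≤ ∫ u, llr P Q u ∂P := llr_integral_nonneg P Q hPQ hPQint
  have n2 : 0 ≤ ∫ u, llr Q R u ∂Q := llr_integral_nonneg Q R hQR hQint
  have key : KL P R = KL P Q + KL Q R := by
    rw [hKL_PR, hKL_PQ, hKL_QR, hsplit, hQeq, ENNReal.ofReal_add n1 n2]
  exact ⟨key, by rw [key]; exact le_add_self⟩
end

section
/- Let μ be a probability measure on ℝ with ∫ x dμ = m, variance ∫ (x − m)² dμ = σ² ∈ (0,∞), and KL(μ ∥ N(m,σ²)) < ∞, where N(m,σ²) denotes the real Gaussian measure with mean m and variance σ². Let 0 < D ≤ 2σ². Then for every probability measure π on ℝ × ℝ whose two marginals both equal μ and which satisfies ∫ (x − y)² dπ(x,y) ≤ D, one has KL(π ∥ μ ⊗ μ) ≥ (1/2)·log( σ² / (D − D²/(4σ²)) ) − KL(μ ∥ N(m,σ²)), where the right-hand side is interpreted in the extended reals. Equivalently, the perfect-realism rate-distortion-perception function of μ under squared-error distortion satisfies R_PR(D) ≥ (1/2)·log( N(X) / (D − D²/(4σ²)) ), with N(X) = e^{2h(X)}/(2πe) the entropy power of μ, since (1/2)log(N(X)/σ²)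 = −KL(μ ∥ N(m,σ²)). -/
open MeasureTheory
open scoped ENNReal NNReal Classical

open ProbabilityTheory

lemma my_integral_llr_nonneg {α : Type*} [MeasurableSpace α] (P Q : Measure α)
    [IsProbabilityMeasure P] [IsProbabilityMeasure Q] (hPQ : P ≪ Q)
    (hI : Integrable (llr P Q) P) : 0 ≤ ∫ x, llr P Q x ∂P := by
  have h2 := exp_neg_llr hPQ
  have key : ∀ᵐ x ∂P, - llr P Q x ≤ (Q.rnDeriv P x).toReal - 1 := by
    filter_upwards [h2] with x hx
    have hpos : 0 < (Q.rnDeriv P x).toReal := hx ▸ Real.exp_pos _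
    have h := Real.log_le_sub_one_of_pos hpos
    rw [← hx] at h ⊢
    rw [Real.log_exp] at h
    exact h
  have hInt : Integrable (fun x => (Q.rnDeriv P x).toReal) P :=
    Measure.integrable_toReal_rnDeriv
  have hle : ∫ x, (- llr P Q x) ∂P ≤ ∫ x, ((Q.rnDeriv P x).toReal - 1) ∂P :=
    integral_mono_ae hI.neg (hInt.sub (integrable_const 1)) key
  rw [integral_neg, integral_sub hInt (integrable_const 1)] at hle
  have hle2 : ∫ x, (Q.rnDeriv P x).toReal ∂P ≤ 1 := by
    have := Measure.integral_toReal_rnDeriv' (μ := Q) (ν := P)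
    have h3 : (Q.singularPart P Set.univ).toReal ≥ 0 := ENNReal.toReal_nonneg
    simp only [measureReal_def, measure_univ, ENNReal.toReal_one] at this
    linarith
  simp only [integral_const, measure_univ, probReal_univ, ENNReal.toReal_one, smul_eq_mul, one_mul] at hle
  linarith

lemma my_dv {α : Type*} [MeasurableSpace α] (P Q : Measure α)
    [IsProbabilityMeasure P] [IsProbabilityMeasure Q] (hPQ : P ≪ Q)
    (hI : Integrable (llr P Q) P) (F : α → ℝ) (hFP : Integrable F P)
    (hexp : Integrable (fun x => Real.exp (F x)) Q) :
    ∫ x, F x ∂P - Real.log (∫ x, Real.exp (F x) ∂Q) ≤ ∫ x, llr P Q x ∂P := by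
  have hR : IsProbabilityMeasure (Q.tilted F) := isProbabilityMeasure_tilted hexp
  have hPR : P ≪ Q.tilted F := hPQ.trans (absolutelyContinuous_tilted hexp)
  have hIR : Integrable (llr P (Q.tilted F)) P :=
    integrable_llr_tilted_right hPQ hFP hI hexp
  have key := integral_llr_tilted_right hPQ hFP hexp hI
  have h0 := my_integral_llr_nonneg P (Q.tilted F) hPR hIR
  linarith [key ▸ h0]

lemma pdf_shift (vv tt : ℝ≥0) (hvv : 0 < (vv:ℝ)) (htt : 0 < (tt:ℝ)) (mm b y : ℝ) :
    gaussianPDFReal mm vv y *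
      Real.exp ((1/(2*(vv:ℝ)))*(y-mm)^2 - (1/(2*(tt:ℝ)))*(y-b)^2
        + Real.log (Real.sqrt vv / Real.sqrt tt)) = gaussianPDFReal b tt y := by
  have hsv : 0 < Real.sqrt vv := Real.sqrt_pos.mpr hvv
  have hst : 0 < Real.sqrt tt := Real.sqrt_pos.mpr htt
  have hconst : (Real.sqrt (2*Real.pi*(vv:ℝ)))⁻¹ * (Real.sqrt vv / Real.sqrt tt)
      = (Real.sqrt (2*Real.pi*(tt:ℝ)))⁻¹ := by
    rw [show (2*Real.pi*(vv:ℝ)) = (2*Real.pi)*(vv:ℝ) by ring, show (2*Real.pi*(tt:ℝ)) = (2*Real.pi)*(tt:ℝ) by ring,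
      Real.sqrt_mul (by positivity), Real.sqrt_mul (by positivity)]
    have h2π : 0 < Real.sqrt (2*Real.pi) := Real.sqrt_pos.mpr (by positivity)
    field_simp
    rw [Real.sqrt_mul (by positivity),
      Real.sqrt_mul (by positivity)]
  have hexp : Real.exp (-(y-mm)^2/(2*(vv:ℝ)))
        * Real.exp ((1/(2*(vv:ℝ)))*(y-mm)^2 - (1/(2*(tt:ℝ)))*(y-b)^2)
      = Real.exp (-(y-b)^2/(2*(tt:ℝ))) := by
    rw [← Real.exp_add]; congr 1; ring
  simp only [gaussianPDFReal]
  rw [Real.exp_add, Real.exp_log (by positivity)]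
  calc (Real.sqrt (2*Real.pi*(vv:ℝ)))⁻¹ * Real.exp (-(y-mm)^2/(2*(vv:ℝ)))
        * (Real.exp ((1/(2*(vv:ℝ)))*(y-mm)^2 - (1/(2*(tt:ℝ)))*(y-b)^2)
           * (Real.sqrt vv / Real.sqrt tt))
      = ((Real.sqrt (2*Real.pi*(vv:ℝ)))⁻¹ * (Real.sqrt vv / Real.sqrt tt))
        * (Real.exp (-(y-mm)^2/(2*(vv:ℝ)))
           * Real.exp ((1/(2*(vv:ℝ)))*(y-mm)^2 - (1/(2*(tt:ℝ)))*(y-b)^2)) := by ring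
    _ = (Real.sqrt (2*Real.pi*(tt:ℝ)))⁻¹ * Real.exp (-(y-b)^2/(2*(tt:ℝ))) := by rw [hconst, hexp]

/-- Scalar Shannon lower bound for the perfect-realism RDPF under squared-error distortion:
any coupling of `μ` with itself with distortion at most `D` has KL divergence from `μ ⊗ μ`
at least `½ log(σ²/(D − D²/(4σ²))) − KL(μ ∥ N(m,σ²))` (in the extended reals). -/
theorem stmt12 (μ : Measure ℝ) [IsProbabilityMeasure μ] (m : ℝ) (v : ℝ≥0) (hv : 0 < v)
    (hmean : ∫ x, x ∂μ = m) (hvar : ∫ x, (x - m) ^ 2 ∂μ = (v : ℝ))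
    (hKLfin : KL μ (ProbabilityTheory.gaussianReal m v) < ⊤)
    (D : ℝ) (hD0 : 0 < D) (hD2 : D ≤ 2 * (v : ℝ))
    (π : Measure (ℝ × ℝ)) [IsProbabilityMeasure π]
    (h1 : π.fst = μ) (h2 : π.snd = μ)
    (hdist : ∫⁻ p, ENNReal.ofReal ((p.1 - p.2) ^ 2) ∂π ≤ ENNReal.ofReal D) :
    ENNReal.ofReal (1 / 2 * Real.log ((v : ℝ) / (D - D ^ 2 / (4 * (v : ℝ))))) ≤
      KL π (μ.prod μ) + KL μ (ProbabilityTheory.gaussianReal m v) := by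
  set N := ProbabilityTheory.gaussianReal m v with hNdef
  -- extract finiteness of KL μ N
  by_cases hQ : μ ≪ N ∧ Integrable (llr μ N) μ
  swap
  · rw [KL, if_neg hQ] at hKLfin; exact absurd hKLfin (by simp)
  by_cases hP : π ≪ μ.prod μ ∧ Integrable (llr π (μ.prod μ)) π
  swap
  · rw [KL, if_neg hP]; simp
  obtain ⟨hac, hIμ⟩ := hQ
  obtain ⟨hacπ, hIπ⟩ := hP
  have hv' : (0:ℝ) < (v:ℝ) := hv
  have hv0 : (v:ℝ) ≠ 0 := ne_of_gt hv'
  -- constants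
  set t : ℝ := D - D ^ 2 / (4 * (v:ℝ)) with htdef
  have ht : 0 < t := by
    rw [htdef]
    have h : D ^ 2 / (4 * (v:ℝ)) ≤ D / 2 := by
      rw [div_le_div_iff₀ (by positivity) (by norm_num)]
      nlinarith
    linarith
  set c : ℝ := ((v:ℝ) - D/2) / (v:ℝ) with hcdef
  have hc0 : 0 ≤ c := by
    apply div_nonneg _ hv'.le
    linarith
  set a : ℝ := m - c * m with hadef
  set Lc : ℝ := Real.log (Real.sqrt (v:ℝ) / Real.sqrt t) with hLcdef
  set f : ℝ × ℝ → ℝ := fun p =>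
    (1/(2*(v:ℝ)))*(p.2-m)^2 - (1/(2*t))*(p.2-(a + c*p.1))^2 + Lc with hfdef
  set F : ℝ × ℝ → ℝ := fun p => f p - llr μ N p.2 with hFdef
  have hfmeas : Measurable f := by fun_prop
  have hFmeas : Measurable F := hfmeas.sub ((measurable_llr μ N).comp measurable_snd)
  -- t as NNReal
  set tNN : ℝ≥0 := ⟨t, ht.le⟩ with htNNdef
  have htNN : (tNN : ℝ) = t := rfl
  have htNN0 : tNN ≠ 0 := by
    simp only [← NNReal.coe_ne_zero, htNN]; exact ne_of_gt ht
  -- integrability of second moments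
  have hmsq : Measurable fun x : ℝ => (x - m)^2 := by fun_prop
  have hmxy : Measurable fun p : ℝ × ℝ => (p.1 - m) * (p.2 - m) := by fun_prop
  have hmdsq : Measurable fun p : ℝ × ℝ => (p.1 - p.2)^2 := by fun_prop
  have hY2 : Integrable (fun x => (x-m)^2) μ := by
    by_contra h
    rw [integral_undef (by simpa using h)] at hvar
    exact hv0 hvar.symm
  have hsnd : Integrable (fun x => (x-m)^2) (Measure.map Prod.snd π) := by
    rw [show Measure.map Prod.snd π = μ from h2]; exact hY2
  have hfst : Integrable (fun x => (x-m)^2) (Measure.map Prod.fst π) := by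
    rw [show Measure.map Prod.fst π = μ from h1]; exact hY2
  have hY2π : Integrable (fun p : ℝ × ℝ => (p.2-m)^2) π :=
    (integrable_map_measure hmsq.aestronglyMeasurable measurable_snd.aemeasurable).mp hsnd
  have hX2π : Integrable (fun p : ℝ × ℝ => (p.1-m)^2) π :=
    (integrable_map_measure hmsq.aestronglyMeasurable measurable_fst.aemeasurable).mp hfst
  have hXY : Integrable (fun p : ℝ × ℝ => (p.1-m)*(p.2-m)) π := by
    have hg : Integrable (fun p : ℝ × ℝ => (1/2 : ℝ) * ((p.1-m)^2 + (p.2-m)^2)) π :=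
      (hX2π.add hY2π).const_mul (1/2)
    apply Integrable.mono' hg hmxy.aestronglyMeasurable
    filter_upwards with p
    rw [Real.norm_eq_abs, abs_mul]
    nlinarith [sq_nonneg (|p.1 - m| - |p.2 - m|), sq_abs (p.1 - m), sq_abs (p.2 - m),
      abs_nonneg (p.1 - m), abs_nonneg (p.2 - m)]
  -- moment values
  have hI2 : ∫ p, ((p: ℝ×ℝ).2-m)^2 ∂π = (v:ℝ) := by
    rw [← hvar, ← h2, Measure.snd,
      integral_map measurable_snd.aemeasurable hmsq.aestronglyMeasurable]
  have hI1 : ∫ p, ((p: ℝ×ℝ).1-m)^2 ∂π = (v:ℝ) := by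
    rw [← hvar, ← h1, Measure.fst,
      integral_map measurable_fst.aemeasurable hmsq.aestronglyMeasurable]
  have hdsq : Integrable (fun p : ℝ × ℝ => (p.1-p.2)^2) π := by
    have : (fun p : ℝ × ℝ => (p.1-p.2)^2)
        = fun p : ℝ × ℝ => (p.1-m)^2 + (p.2-m)^2 - 2*((p.1-m)*(p.2-m)) := by
      funext p; ring
    rw [this]
    exact (hX2π.add hY2π).sub (hXY.const_mul 2)
  have hIdist : ∫ p, ((p : ℝ×ℝ).1-p.2)^2 ∂π ≤ D := by
    rw [integral_eq_lintegral_of_nonneg_ae (Filter.Eventually.of_forall fun p => by positivity)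
      hmdsq.aestronglyMeasurable]
    exact ENNReal.toReal_le_of_le_ofReal hD0.le hdist
  have hIdisteq : ∫ p, ((p : ℝ×ℝ).1-p.2)^2 ∂π
      = (v:ℝ) + (v:ℝ) - 2 * ∫ p, ((p: ℝ×ℝ).1-m)*(p.2-m) ∂π := by
    have : (fun p : ℝ × ℝ => (p.1-p.2)^2)
        = fun p : ℝ × ℝ => (p.1-m)^2 + (p.2-m)^2 - 2*((p.1-m)*(p.2-m)) := by
      funext p; ring
    have j1 : Integrable (fun p : ℝ × ℝ => (p.1-m)^2 + (p.2-m)^2) π := hX2π.add hY2π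
    have j2 : Integrable (fun p : ℝ × ℝ => 2*((p.1-m)*(p.2-m))) π := hXY.const_mul 2
    rw [this, integral_sub j1 j2, integral_add hX2π hY2π, integral_const_mul _ _, hI1, hI2]
  have hCov : (v:ℝ) - D/2 ≤ ∫ p, ((p: ℝ×ℝ).1-m)*(p.2-m) ∂π := by
    rw [hIdisteq] at hIdist; linarith
  -- error term
  have herr_eq : (fun p : ℝ × ℝ => (p.2-(a + c*p.1))^2)
      = fun p : ℝ × ℝ => (p.2-m)^2 + c^2*(p.1-m)^2 - 2*c*((p.1-m)*(p.2-m)) := by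
    funext p; simp only [hadef]; ring
  have hErr : Integrable (fun p : ℝ × ℝ => (p.2-(a + c*p.1))^2) π := by
    have k1 : Integrable (fun p : ℝ × ℝ => (p.2-m)^2 + c^2*(p.1-m)^2) π :=
      hY2π.add (hX2π.const_mul _)
    have k2 : Integrable (fun p : ℝ × ℝ => 2*c*((p.1-m)*(p.2-m))) π := hXY.const_mul _
    rw [herr_eq]; exact k1.sub k2
  have hIErr : ∫ p, ((p: ℝ×ℝ).2-(a + c*p.1))^2 ∂π ≤ t := by
    have hval : ∫ p, ((p: ℝ×ℝ).2-(a + c*p.1))^2 ∂π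
        = (v:ℝ) + c^2*(v:ℝ) - 2*c*∫ p, ((p: ℝ×ℝ).1-m)*(p.2-m) ∂π := by
      have k1 : Integrable (fun p : ℝ × ℝ => (p.2-m)^2 + c^2*(p.1-m)^2) π :=
        hY2π.add (hX2π.const_mul _)
      have k2 : Integrable (fun p : ℝ × ℝ => 2*c*((p.1-m)*(p.2-m))) π := hXY.const_mul _
      have k3 : Integrable (fun p : ℝ × ℝ => c^2*(p.1-m)^2) π := hX2π.const_mul _
      rw [show (fun p : ℝ × ℝ => (p.2-(a + c*p.1))^2) = _ from herr_eq,
        integral_sub k1 k2, integral_add hY2π k3, integral_const_mul _ _, integral_const_mul _ _,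
        hI1, hI2]
    rw [hval]
    have hmul : c * ((v:ℝ) - D/2) ≤ c * ∫ p, ((p: ℝ×ℝ).1-m)*(p.2-m) ∂π :=
      mul_le_mul_of_nonneg_left hCov hc0
    have hfield : (v:ℝ) + c^2*(v:ℝ) - 2*(c*((v:ℝ) - D/2)) = t := by
      simp only [hcdef, htdef]; field_simp; ring
    calc (v:ℝ) + c^2*(v:ℝ) - 2*c*∫ p, ((p: ℝ×ℝ).1-m)*(p.2-m) ∂π
        = (v:ℝ) + c^2*(v:ℝ) - 2*(c*∫ p, ((p: ℝ×ℝ).1-m)*(p.2-m) ∂π) := by ring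
      _ ≤ (v:ℝ) + c^2*(v:ℝ) - 2*(c*((v:ℝ) - D/2)) := by linarith
      _ = t := hfield
  -- integral of f
  have int1 : Integrable (fun p : ℝ × ℝ => (1/(2*(v:ℝ)))*(p.2-m)^2) π := hY2π.const_mul _
  have int2 : Integrable (fun p : ℝ × ℝ => (1/(2*t))*(p.2-(a + c*p.1))^2) π := hErr.const_mul _
  have int12 : Integrable
      (fun p : ℝ × ℝ => (1/(2*(v:ℝ)))*(p.2-m)^2 - (1/(2*t))*(p.2-(a + c*p.1))^2) π :=
    int1.sub int2
  have hfint : Integrable f π := int12.add (integrable_const Lc)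
  have hfval : Lc ≤ ∫ p, f p ∂π := by
    have : ∫ p, f p ∂π = (1/(2*(v:ℝ))) * (v:ℝ)
        - (1/(2*t)) * ∫ p, ((p: ℝ×ℝ).2-(a + c*p.1))^2 ∂π + Lc := by
      simp only [hfdef]
      rw [integral_add int12 (integrable_const Lc),
        integral_sub int1 int2, integral_const_mul _ _,
        integral_const_mul _ _, hI2, integral_const]
      simp
    rw [this]
    have h1 : (1/(2*t)) * ∫ p, ((p: ℝ×ℝ).2-(a + c*p.1))^2 ∂π ≤ (1/(2*t)) * t :=
      mul_le_mul_of_nonneg_left hIErr (by positivity)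
    have h2 : (1/(2*(v:ℝ))) * (v:ℝ) = 1/2 := by field_simp
    have h3 : (1/(2*t)) * t = 1/2 := by field_simp
    linarith
  -- llr composed with snd
  have hmapsnd : Measure.map Prod.snd π = μ := h2
  have hllrsnd : Integrable (fun p : ℝ × ℝ => llr μ N p.2) π := by
    have h : Integrable (llr μ N) (Measure.map Prod.snd π) := by rw [hmapsnd]; exact hIμ
    exact (integrable_map_measure (stronglyMeasurable_llr μ N).aestronglyMeasurable
      measurable_snd.aemeasurable).mp h
  have hBeq : ∫ p, llr μ N (p : ℝ×ℝ).2 ∂π = ∫ y, llr μ N y ∂μ :=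
    calc ∫ p, llr μ N (p : ℝ×ℝ).2 ∂π
        = ∫ y, llr μ N y ∂(Measure.map Prod.snd π) :=
          (integral_map measurable_snd.aemeasurable
            (stronglyMeasurable_llr μ N).aestronglyMeasurable).symm
      _ = ∫ y, llr μ N y ∂μ := by rw [hmapsnd]
  -- the exponential bound
  have hNac : N = volume.withDensity (gaussianPDF m v) :=
    gaussianReal_of_var_ne_zero m (by exact_mod_cast hv0)
  have hinner : ∀ x : ℝ, ∫⁻ y, ENNReal.ofReal (Real.exp (f (x, y))) ∂N = 1 := by
    intro x
    rw [hNac, lintegral_withDensity_eq_lintegral_mul _ (measurable_gaussianPDF m v)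
      (by fun_prop)]
    have hpt : ∀ y : ℝ, (gaussianPDF m v * fun y => ENNReal.ofReal (Real.exp (f (x, y)))) y
        = gaussianPDF (a + c*x) tNN y := by
      intro y
      simp only [Pi.mul_apply, gaussianPDF, ← ENNReal.ofReal_mul (gaussianPDFReal_nonneg m v y)]
      congr 1
      exact pdf_shift v tNN hv' ht m (a + c*x) y
    simp_rw [hpt]
    exact lintegral_gaussianPDF_eq_one (a + c*x) htNN0
  have hstep : ∀ x : ℝ, ∫⁻ y, ENNReal.ofReal (Real.exp (f (x, y))) * N.rnDeriv μ y ∂μ ≤ 1 := by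
    intro x
    have heq : ∫⁻ y, ENNReal.ofReal (Real.exp (f (x, y))) * N.rnDeriv μ y ∂μ
        = ∫⁻ y, ENNReal.ofReal (Real.exp (f (x, y))) ∂(μ.withDensity (N.rnDeriv μ)) := by
      rw [lintegral_withDensity_eq_lintegral_mul _ (Measure.measurable_rnDeriv N μ)
        (by fun_prop)]
      simp_rw [Pi.mul_apply, mul_comm]
    rw [heq]
    calc ∫⁻ y, ENNReal.ofReal (Real.exp (f (x, y))) ∂(μ.withDensity (N.rnDeriv μ))
        ≤ ∫⁻ y, ENNReal.ofReal (Real.exp (f (x, y))) ∂N :=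
          lintegral_mono' (Measure.withDensity_rnDeriv_le N μ) le_rfl
      _ = 1 := hinner x
  have hexpm : Measurable fun p : ℝ × ℝ => Real.exp (F p) := Real.measurable_exp.comp hFmeas
  have hGm : Measurable fun p : ℝ × ℝ => ENNReal.ofReal (Real.exp (F p)) :=
    hexpm.ennreal_ofReal
  have hG : ∫⁻ p, ENNReal.ofReal (Real.exp (F p)) ∂(μ.prod μ) ≤ 1 := by
    rw [lintegral_prod _ hGm.aemeasurable]
    calc ∫⁻ x, ∫⁻ y, ENNReal.ofReal (Real.exp (F (x, y))) ∂μ ∂μ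
        ≤ ∫⁻ x, 1 ∂μ := by
          apply lintegral_mono
          intro x
          dsimp only
          have hae : ∀ᵐ y ∂μ, ENNReal.ofReal (Real.exp (F (x, y)))
              = ENNReal.ofReal (Real.exp (f (x, y))) * N.rnDeriv μ y := by
            filter_upwards [exp_neg_llr hac, Measure.rnDeriv_lt_top N μ] with y hy hy2
            simp only [hFdef]
            rw [show f (x, y) - llr μ N y = f (x, y) + (- llr μ N y) by ring,
              Real.exp_add, ENNReal.ofReal_mul (Real.exp_pos _).le, hy,
              ENNReal.ofReal_toReal hy2.ne]
          rw [lintegral_congr_ae hae]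
          exact hstep x
      _ = 1 := by simp
  have hexpQ : Integrable (fun p => Real.exp (F p)) (μ.prod μ) := by
    refine ⟨hexpm.aestronglyMeasurable, ?_⟩
    rw [hasFiniteIntegral_iff_ofReal (Filter.Eventually.of_forall fun p => (Real.exp_pos _).le)]
    exact lt_of_le_of_lt hG ENNReal.one_lt_top
  have hexple : ∫ p, Real.exp (F p) ∂(μ.prod μ) ≤ 1 := by
    rw [integral_eq_lintegral_of_nonneg_ae
      (Filter.Eventually.of_forall fun p => (Real.exp_pos _).le)
      hexpm.aestronglyMeasurable]
    exact ENNReal.toReal_le_of_le_ofReal zero_le_one (by simpa using hG)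
  have hlog : Real.log (∫ p, Real.exp (F p) ∂(μ.prod μ)) ≤ 0 :=
    Real.log_nonpos (integral_nonneg fun p => (Real.exp_pos _).le) hexple
  -- Donsker-Varadhan
  have hFint : Integrable F π := hfint.sub hllrsnd
  have hdv := my_dv π (μ.prod μ) hacπ hIπ F hFint hexpQ
  have hFval : ∫ p, F p ∂π = ∫ p, f p ∂π - ∫ y, llr μ N y ∂μ := by
    simp only [hFdef]
    rw [integral_sub hfint hllrsnd, hBeq]
  -- nonneg of both KLs
  have hA0 : 0 ≤ ∫ p, llr π (μ.prod μ) p ∂π := my_integral_llr_nonneg _ _ hacπ hIπ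
  have hB0 : 0 ≤ ∫ y, llr μ N y ∂μ := my_integral_llr_nonneg _ _ hac hIμ
  -- final log computation
  have hLc : Lc = 1/2 * Real.log ((v:ℝ) / t) := by
    rw [hLcdef, ← Real.sqrt_div hv'.le, Real.log_sqrt (by positivity)]
    ring
  -- conclude
  rw [KL, if_pos ⟨hacπ, hIπ⟩, KL, if_pos ⟨hac, hIμ⟩, ← ENNReal.ofReal_add hA0 hB0]
  apply ENNReal.ofReal_le_ofReal
  rw [← hLc]
  rw [hFval] at hdv
  linarith
end
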